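/- arXiv:2104.07449 — 2 statements merged into one kernel-verified Lean document; each statement's English description precedes it below -/
import Mathlib

section
/- Let Y be a Hermitian M×M matrix all of whose eigenvalues are ≥ 1, and let Z be an M×M Hermitian unitary matrix (Z = Z†, Z² = I). Then the matrix X = Y Z is diagonalizable over ℂ, has only real eigenvalues, and every eigenvalue λ of X satisfies |λ| ≥ 1. -/
/-!
With `S = Y^{1/2}`, invertible since `Y ≥ 1`, the matrix `Y Z = S (S Z S) S⁻¹` is similar to the
Hermitian matrix `S Z S`, hence diagonalizable with real eigenvalues. If `Y Z x = λ x` with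
`x ≠ 0`, then `y = Z x` satisfies `Y y = λ Z y`, so `y⋆ Y y = λ y⋆ Z y`. Both quadratic forms are
real, `y⋆ Y y ≥ y⋆ y > 0`, and `|y⋆ Z y| ≤ y⋆ y` by Cauchy–Schwarz since `Z` is unitary; hence `λ`
is real and `|λ| ≥ 1`.
-/

open Matrix ComplexOrder

lemma RCLike.im_eq_zero_and_one_le_norm_of_ofReal_eq_mul {𝕜 : Type*} [RCLike 𝕜] {lam : 𝕜}
    {α β : ℝ} (h : (α : 𝕜) = lam * β) (hα : 0 < α) (hβ : |β| ≤ α) :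
    RCLike.im lam = 0 ∧ 1 ≤ ‖lam‖ := by
  have hβ0 : β ≠ 0 := by
    rintro rfl
    simp only [RCLike.ofReal_zero, mul_zero, RCLike.ofReal_eq_zero] at h
    exact hα.ne' h
  have hlam : lam = ((α / β : ℝ) : 𝕜) := by
    rw [RCLike.ofReal_div, h, mul_div_cancel_right₀ _ (RCLike.ofReal_ne_zero.2 hβ0)]
  rw [hlam, RCLike.ofReal_im, RCLike.norm_ofReal, abs_div, abs_of_pos hα]
  exact ⟨rfl, (one_le_div (abs_pos.2 hβ0)).2 hβ⟩

namespace Matrix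

variable {n 𝕜 : Type*} [Fintype n] [RCLike 𝕜]

lemma IsHermitian.ofReal_re_star_dotProduct_mulVec {A : Matrix n n 𝕜} (hA : A.IsHermitian)
    (y : n → 𝕜) : (RCLike.re (star y ⬝ᵥ A *ᵥ y) : 𝕜) = star y ⬝ᵥ A *ᵥ y :=
  RCLike.conj_eq_iff_re.1 (RCLike.conj_eq_iff_im.2 (hA.im_star_dotProduct_mulVec_self y))

variable [DecidableEq n]

def IsRealDiagonalizable (A : Matrix n n 𝕜) : Prop :=
  ∃ (P : Matrix n n 𝕜) (d : n → ℝ), IsUnit P.det ∧ A = P * diagonal (fun i => (d i : 𝕜)) * P⁻¹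

lemma IsHermitian.isRealDiagonalizable {H : Matrix n n 𝕜} (hH : H.IsHermitian) :
    H.IsRealDiagonalizable := by
  set U : Matrix n n 𝕜 := ↑hH.eigenvectorUnitary
  have hUU : star U * U = 1 := Unitary.star_mul_self_of_mem hH.eigenvectorUnitary.2
  refine ⟨U, hH.eigenvalues, isUnit_det_of_left_inverse hUU, ?_⟩
  rw [inv_eq_left_inv hUU]
  exact hH.spectral_theorem

lemma IsRealDiagonalizable.conj {A S : Matrix n n 𝕜} (hA : A.IsRealDiagonalizable)
    (hS : IsUnit S.det) : (S * A * S⁻¹).IsRealDiagonalizable := by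
  obtain ⟨P, d, hP, rfl⟩ := hA
  refine ⟨S * P, d, by rw [det_mul]; exact hS.mul hP, ?_⟩
  simp only [mul_inv_rev, Matrix.mul_assoc]

open scoped MatrixOrder in
lemma PosDef.isRealDiagonalizable_mul {Y Z : Matrix n n 𝕜} (hY : Y.PosDef)
    (hZ : Z.IsHermitian) : (Y * Z).IsRealDiagonalizable := by
  set S := CFC.sqrt Y
  have hSH : S.IsHermitian := (CFC.sqrt_nonneg Y).isSelfAdjoint
  have hSS : S * S = Y := CFC.sqrt_mul_sqrt_self Y hY.posSemidef.nonneg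
  have hS : IsUnit S.det :=
    (isUnit_iff_isUnit_det S).1 <| (CFC.isUnit_sqrt_iff Y hY.posSemidef.nonneg).2 hY.isUnit
  have hSZS : (S * Z * S).IsHermitian := by
    simpa only [hSH.eq] using isHermitian_mul_mul_conjTranspose S hZ
  convert hSZS.isRealDiagonalizable.conj hS using 1
  rw [← hSS, Matrix.mul_assoc, Matrix.mul_assoc, Matrix.mul_assoc, mul_nonsing_inv S hS, mul_one]

lemma norm_star_dotProduct_mulVec_le {U : Matrix n n 𝕜} (hU : U ∈ unitaryGroup n 𝕜)
    (y : n → 𝕜) : ‖star y ⬝ᵥ U *ᵥ y‖ ≤ RCLike.re (star y ⬝ᵥ y) := by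
  have hinner (u v : n → 𝕜) : inner 𝕜 (WithLp.toLp 2 u) (WithLp.toLp 2 v) = star u ⬝ᵥ v :=
    dotProduct_comm _ _
  have hnorm (u : n → 𝕜) : ‖WithLp.toLp 2 u‖ ^ 2 = RCLike.re (star u ⬝ᵥ u) := by
    rw [← hinner, ← norm_sq_eq_re_inner]
  have hUy : star (U *ᵥ y) ⬝ᵥ U *ᵥ y = star y ⬝ᵥ y := by
    rw [star_mulVec, ← dotProduct_mulVec, mulVec_mulVec, ← star_eq_conjTranspose,
      (mem_unitaryGroup_iff').1 hU, one_mulVec]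
  have hnorm_Uy : ‖WithLp.toLp 2 (U *ᵥ y)‖ = ‖WithLp.toLp 2 y‖ := by
    rw [← sq_eq_sq₀ (norm_nonneg _) (norm_nonneg _), hnorm, hnorm, hUy]
  calc ‖star y ⬝ᵥ U *ᵥ y‖ ≤ ‖WithLp.toLp 2 y‖ * ‖WithLp.toLp 2 (U *ᵥ y)‖ := by
        rw [← hinner]; exact norm_inner_le_norm _ _
    _ = RCLike.re (star y ⬝ᵥ y) := by rw [hnorm_Uy, ← sq, hnorm]

lemma im_eq_zero_and_one_le_norm_of_mulVec_eq_smul_mulVec {Y Z : Matrix n n 𝕜}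
    (hY : (Y - 1).PosSemidef) (hZH : Z.IsHermitian) (hZU : Z ∈ unitaryGroup n 𝕜) {lam : 𝕜}
    {y : n → 𝕜} (hy : y ≠ 0) (h : Y *ᵥ y = lam • Z *ᵥ y) :
    RCLike.im lam = 0 ∧ 1 ≤ ‖lam‖ := by
  have hYH : Y.IsHermitian := by simpa using hY.isHermitian.add isHermitian_one
  set α := RCLike.re (star y ⬝ᵥ Y *ᵥ y)
  set β := RCLike.re (star y ⬝ᵥ Z *ᵥ y)
  set γ := RCLike.re (star y ⬝ᵥ y)
  have hαβ : (α : 𝕜) = lam * β := by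
    rw [hYH.ofReal_re_star_dotProduct_mulVec, hZH.ofReal_re_star_dotProduct_mulVec, h,
      dotProduct_smul, smul_eq_mul]
  have hγα : γ ≤ α := by
    simpa [sub_mulVec, dotProduct_sub] using hY.re_dotProduct_nonneg y
  have hγ : 0 < γ := by simpa using PosDef.one.re_dotProduct_pos hy
  have hβγ : |β| ≤ γ := (RCLike.abs_re_le_norm _).trans (norm_star_dotProduct_mulVec_le hZU y)
  exact RCLike.im_eq_zero_and_one_le_norm_of_ofReal_eq_mul hαβ (hγ.trans_le hγα)
    (hβγ.trans hγα)

end Matrix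

theorem stmt3_general (M : ℕ) (Y Z : Matrix (Fin M) (Fin M) ℂ)
    (hY1 : (Y - 1).PosSemidef)
    (hZH : Z.IsHermitian) (hZ2 : Z * Z = 1) :
    (∃ (P : Matrix (Fin M) (Fin M) ℂ) (d : Fin M → ℝ), IsUnit P.det ∧
      Y * Z = P * Matrix.diagonal (fun i => (d i : ℂ)) * P⁻¹) ∧
    (∀ (lam : ℂ) (x : Fin M → ℂ), x ≠ 0 → (Y * Z).mulVec x = lam • x →
      lam.im = 0 ∧ 1 ≤ ‖lam‖) := by
  have hY : Y.PosDef := by simpa using PosDef.posSemidef_add hY1 PosDef.one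
  have hZU : Z ∈ unitaryGroup (Fin M) ℂ := by
    rw [mem_unitaryGroup_iff', star_eq_conjTranspose, hZH.eq, hZ2]
  refine ⟨hY.isRealDiagonalizable_mul hZH, fun lam x hx hYZx => ?_⟩
  refine im_eq_zero_and_one_le_norm_of_mulVec_eq_smul_mulVec hY1 hZH hZU (y := Z *ᵥ x) ?_ ?_
  · intro hZx
    apply hx
    rw [← one_mulVec x, ← hZ2, ← mulVec_mulVec, hZx, mulVec_zero]
  · rw [mulVec_mulVec, hYZx, mulVec_mulVec, hZ2, one_mulVec]

/-- If `Y` is Hermitian with all eigenvalues ≥ 1 and `Z` is a Hermitian unitary,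
then `X = Y Z` is diagonalizable with real eigenvalues, all of modulus ≥ 1. -/
theorem stmt3 (M : ℕ) (Y Z : Matrix (Fin M) (Fin M) ℂ)
    (hYH : Y.IsHermitian) (hY1 : (Y - 1).PosSemidef)
    (hZH : Z.IsHermitian) (hZ2 : Z * Z = 1) :
    (∃ (P : Matrix (Fin M) (Fin M) ℂ) (d : Fin M → ℝ), IsUnit P.det ∧
      Y * Z = P * Matrix.diagonal (fun i => (d i : ℂ)) * P⁻¹) ∧
    (∀ (lam : ℂ) (x : Fin M → ℂ), x ≠ 0 → (Y * Z).mulVec x = lam • x →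
      lam.im = 0 ∧ 1 ≤ ‖lam‖) :=
  stmt3_general M Y Z hY1 hZH hZ2
end

section
/- Let h be a Hermitian 2N×2N matrix, positive definite, with τ_z = diag(I_N,−I_N), and suppose (τ_z h)² = I (flat bands at ±1). Define h̃ = (1/4)(h + τ_z h τ_z + τ_z h τ_z h + h τ_z h τ_z). Then h̃ commutes with τ_z (i.e., h̃ is block diagonal / particle-number conserving) and h̃ is Hermitian. -/
open Matrix ComplexOrder

/-!
Since `τ_z` is a self-adjoint involution, conjugation by `τ_z` swaps `h` with `τ_z h τ_z` and
`τ_z h τ_z h` with `h τ_z h τ_z`, so it fixes `h̃`; taking adjoints fixes the first two summands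
and swaps the last two.
-/

theorem Commute.add_conj_add_conj_mul {R : Type*} [Ring R] {τ : R} (hτ : τ * τ = 1) (h : R) :
    Commute τ (h + τ * h * τ + τ * h * τ * h + h * τ * h * τ) := by
  have hτ' : ∀ x : R, τ * (τ * x) = x := fun x => by rw [← mul_assoc, hτ, one_mul]
  simp only [Commute, SemiconjBy, add_mul, mul_add, mul_assoc, hτ, hτ', mul_one]
  abel

theorem IsSelfAdjoint.add_conj_add_conj_mul {R : Type*} [Ring R] [StarRing R] {τ h : R}
    (hτ : IsSelfAdjoint τ) (hh : IsSelfAdjoint h) :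
    IsSelfAdjoint (h + τ * h * τ + τ * h * τ * h + h * τ * h * τ) := by
  simp only [IsSelfAdjoint, star_add, star_mul, hτ.star_eq, hh.star_eq, mul_assoc]
  abel

namespace Matrix

variable {m n α : Type*} [DecidableEq m] [DecidableEq n]

theorem fromBlocks_one_zero_zero_neg_one_mul_self [Fintype m] [Fintype n] [Ring α] :
    (fromBlocks 1 0 0 (-1) : Matrix (m ⊕ n) (m ⊕ n) α) * fromBlocks 1 0 0 (-1) = 1 := by
  simp [fromBlocks_multiply, ← fromBlocks_one]

theorem isSelfAdjoint_fromBlocks_one_zero_zero_neg_one [Ring α] [StarRing α] :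
    IsSelfAdjoint (fromBlocks 1 0 0 (-1) : Matrix (m ⊕ n) (m ⊕ n) α) :=
  (isHermitian_one.fromBlocks conjTranspose_zero isHermitian_one.neg).isSelfAdjoint

end Matrix

theorem stmt12_general (N : ℕ)
    (τz h : Matrix (Fin N ⊕ Fin N) (Fin N ⊕ Fin N) ℂ)
    (hτz : τz = Matrix.fromBlocks 1 0 0 (-1))
    (hH : h.IsHermitian)
    (ht : Matrix (Fin N ⊕ Fin N) (Fin N ⊕ Fin N) ℂ)
    (hht : ht = ((1:ℂ)/4) • (h + τz * h * τz + τz * h * τz * h + h * τz * h * τz)) :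
    ht.IsHermitian ∧ ht * τz = τz * ht := by
  subst hτz hht
  have hquarter : IsSelfAdjoint ((1:ℂ) / 4) := by simp [IsSelfAdjoint]
  refine ⟨isHermitian_iff_isSelfAdjoint.mpr ?_, ?_⟩
  · exact hquarter.smul
      (isSelfAdjoint_fromBlocks_one_zero_zero_neg_one.add_conj_add_conj_mul hH.isSelfAdjoint)
  · exact ((Commute.add_conj_add_conj_mul fromBlocks_one_zero_zero_neg_one_mul_self h).smul_right
      _).symm

/-- For a flattened positive-definite bosonic BdG matrix `h` (so `(τ_z h)² = I`), the
matrix `h̃ = (1/4)(h + τ_z h τ_z + τ_z h τ_z h + h τ_z h τ_z)` is Hermitian and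
commutes with `τ_z`, i.e. it is particle-number conserving. -/
theorem stmt12 (N : ℕ)
    (τz h : Matrix (Fin N ⊕ Fin N) (Fin N ⊕ Fin N) ℂ)
    (hτz : τz = Matrix.fromBlocks 1 0 0 (-1))
    (hH : h.IsHermitian) (hpos : h.PosDef)
    (hflat : (τz * h) * (τz * h) = 1)
    (ht : Matrix (Fin N ⊕ Fin N) (Fin N ⊕ Fin N) ℂ)
    (hht : ht = ((1:ℂ)/4) • (h + τz * h * τz + τz * h * τz * h + h * τz * h * τz)) :
    ht.IsHermitian ∧ ht * τz = τz * ht :=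
  stmt12_general N τz h hτz hH ht hht
end
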